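/- Let x be a random vector in ℝ^n with mean μ and covariance Σ, and let a ∈ ℝ^n, b ∈ ℝ, 0 < ε < 1. Then the distributionally robust chance constraint inf_{x ~ (μ,Σ)} Pr(aᵀx + b ≤ 0) ≥ 1 − ε (the infimum over all distributions with mean μ and covariance Σ) holds if and only if aᵀμ + b + √((1−ε)/ε)·√(aᵀΣa) ≤ 0. -/

import Mathlib

/-!
Sufficiency is Cantelli's one-sided Chebyshev inequality for the scalar `L = aᵀ(x - μ)`, which has
mean `0` and variance `s = aᵀSa`: `P(L ≥ λ) ≤ s / (s + λ²)` for `λ > 0`, applied with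
`λ = -(aᵀμ + b)`. Necessity is its sharpness: for every `t > 0` there is a finitely supported law
with mean `μ` and covariance `S` on which `L = t√s` with probability `1 / (1 + t²)` and
`L = -√s / t` otherwise. Writing `S = wwᵀ + Σ vₖvₖᵀ` with `aᵀw = √s` and `aᵀvₖ = 0`, it is the
law of `μ + T w + Y` for a two-point scalar `T` independent of a symmetric `Y` supported on the
`±vₖ` directions. If the condition fails, taking `t` just below `√((1-ε)/ε)` violates the chance
constraint.
-/

open MeasureTheory Matrix Topology

theorem cantelli {Ω : Type*} [MeasurableSpace Ω] {ν : Measure Ω} [IsProbabilityMeasure ν]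
    {L : Ω → ℝ} (hL : Integrable L ν) (hL2 : Integrable (fun ω => L ω ^ 2) ν)
    (h0 : ∫ ω, L ω ∂ν = 0) {l : ℝ} (hl : 0 < l) :
    ν.real {ω | l ≤ L ω} ≤ (∫ ω, L ω ^ 2 ∂ν) / (∫ ω, L ω ^ 2 ∂ν + l ^ 2) := by
  set s := ∫ ω, L ω ^ 2 ∂ν
  have hs : 0 ≤ s := integral_nonneg fun ω => sq_nonneg _
  -- Markov's inequality for `(L + u)²`, with the optimal shift `u = s / l`
  set u := s / l
  have hu : 0 ≤ u := div_nonneg hs hl.le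
  have hexp : (fun ω => (L ω + u) ^ 2) = fun ω => L ω ^ 2 + (2 * u * L ω + u ^ 2) := by
    ext ω; ring
  have hlin : Integrable (fun ω => 2 * u * L ω + u ^ 2) ν :=
    (hL.const_mul _).add (integrable_const _)
  have hint : Integrable (fun ω => (L ω + u) ^ 2) ν := hexp ▸ hL2.add hlin
  have hE : ∫ ω, (L ω + u) ^ 2 ∂ν = s + u ^ 2 := by
    rw [hexp, integral_add hL2 hlin, integral_add (hL.const_mul _) (integrable_const _),
      integral_const_mul, h0, integral_const, probReal_univ, one_smul, mul_zero, zero_add]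
  have hmarkov := mul_meas_ge_le_integral_of_nonneg
    (Filter.Eventually.of_forall fun ω => sq_nonneg (L ω + u)) hint ((l + u) ^ 2)
  have hsub : {ω | l ≤ L ω} ⊆ {ω | (l + u) ^ 2 ≤ (L ω + u) ^ 2} := fun ω (hω : l ≤ L ω) =>
    show (l + u) ^ 2 ≤ (L ω + u) ^ 2 from pow_le_pow_left₀ (by linarith) (by linarith) 2
  calc ν.real {ω | l ≤ L ω} ≤ ν.real {ω | (l + u) ^ 2 ≤ (L ω + u) ^ 2} := measureReal_mono hsub
    _ ≤ (s + u ^ 2) / (l + u) ^ 2 := by rw [le_div_iff₀ (by positivity)]; linarith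
    _ = s / (s + l ^ 2) := by simp only [u]; field_simp; ring

theorem measureReal_add_pos_le {Ω : Type*} [MeasurableSpace Ω] {ν : Measure Ω}
    [IsProbabilityMeasure ν] {L : Ω → ℝ} (hL : Integrable L ν)
    (hL2 : Integrable (fun ω => L ω ^ 2) ν) (h0 : ∫ ω, L ω ∂ν = 0) {m ε : ℝ} (hε0 : 0 < ε)
    (hε1 : ε < 1) (hm : m ≤ 0) (hms : (1 - ε) * ∫ ω, L ω ^ 2 ∂ν ≤ ε * m ^ 2) :
    ν.real {ω | 0 < L ω + m} ≤ ε := by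
  set s := ∫ ω, L ω ^ 2 ∂ν
  have hs : 0 ≤ s := integral_nonneg fun ω => sq_nonneg _
  rcases hm.lt_or_eq with hm | rfl
  · calc ν.real {ω | 0 < L ω + m} ≤ ν.real {ω | -m ≤ L ω} :=
          measureReal_mono fun ω (hω : 0 < L ω + m) => show -m ≤ L ω by linarith
      _ ≤ s / (s + (-m) ^ 2) := cantelli hL hL2 h0 (neg_pos.2 hm)
      _ ≤ ε := by
          rw [div_le_iff₀ (add_pos_of_nonneg_of_pos hs (pow_pos (neg_pos.2 hm) 2))]; linarith
  · have hae := (integral_eq_zero_iff_of_nonneg (fun ω => sq_nonneg (L ω)) hL2).1 (by nlinarith)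
    have hnull : ν {ω | 0 < L ω + 0} = 0 :=
      measure_mono_null (fun ω (hω : 0 < L ω + 0) => pow_ne_zero 2 (add_zero (L ω) ▸ hω).ne')
        (ae_iff.1 hae)
    rw [measureReal_def, hnull]
    exact hε0.le

structure HasMeanCov {ι : Type*} (ν : Measure (ι → ℝ)) (μ : ι → ℝ) (S : Matrix ι ι ℝ) : Prop where
  isProbabilityMeasure : IsProbabilityMeasure ν
  integrable_eval : ∀ i, Integrable (fun x => x i) ν
  integrable_cov : ∀ i j, Integrable (fun x => (x i - μ i) * (x j - μ j)) ν
  integral_eval : ∀ i, ∫ x, x i ∂ν = μ i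
  integral_cov : ∀ i j, ∫ x, (x i - μ i) * (x j - μ j) ∂ν = S i j

theorem sq_dotProduct_sub_eq_sum {ι : Type*} [Fintype ι] (a μ x : ι → ℝ) :
    (a ⬝ᵥ (x - μ)) ^ 2 = ∑ i, ∑ j, a i * a j * ((x i - μ i) * (x j - μ j)) := by
  simp only [dotProduct, Pi.sub_apply, sq, Finset.sum_mul_sum]
  exact Finset.sum_congr rfl fun i _ => Finset.sum_congr rfl fun j _ => by ring

namespace HasMeanCov

variable {ι : Type*} {ν : Measure (ι → ℝ)} {μ : ι → ℝ} {S : Matrix ι ι ℝ}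

theorem integrable_mul_sub (h : HasMeanCov ν μ S) (a : ι → ℝ) (i : ι) :
    Integrable (fun x => a i * (x i - μ i)) ν := by
  have := h.isProbabilityMeasure
  exact ((h.integrable_eval i).sub (integrable_const _)).const_mul _

variable [Fintype ι]

theorem integrable_dotProduct_sub (h : HasMeanCov ν μ S) (a : ι → ℝ) :
    Integrable (fun x => a ⬝ᵥ (x - μ)) ν :=
  integrable_finsetSum _ fun i _ => h.integrable_mul_sub a i

theorem integrable_sq_dotProduct_sub (h : HasMeanCov ν μ S) (a : ι → ℝ) :
    Integrable (fun x => (a ⬝ᵥ (x - μ)) ^ 2) ν := by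
  simp only [sq_dotProduct_sub_eq_sum]
  exact integrable_finsetSum _ fun i _ => integrable_finsetSum _ fun j _ =>
    (h.integrable_cov i j).const_mul _

theorem integral_dotProduct_sub (h : HasMeanCov ν μ S) (a : ι → ℝ) :
    ∫ x, a ⬝ᵥ (x - μ) ∂ν = 0 := by
  have := h.isProbabilityMeasure
  simp only [dotProduct, Pi.sub_apply]
  rw [integral_finsetSum _ fun i _ => h.integrable_mul_sub a i]
  refine Finset.sum_eq_zero fun i _ => ?_
  rw [integral_const_mul, integral_sub (h.integrable_eval i) (integrable_const _),
    h.integral_eval, integral_const, probReal_univ, one_smul, sub_self, mul_zero]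

theorem integral_sq_dotProduct_sub (h : HasMeanCov ν μ S) (a : ι → ℝ) :
    ∫ x, (a ⬝ᵥ (x - μ)) ^ 2 ∂ν = a ⬝ᵥ S *ᵥ a := by
  simp only [sq_dotProduct_sub_eq_sum]
  rw [integral_finsetSum _ fun i _ => integrable_finsetSum _ fun j _ =>
    (h.integrable_cov i j).const_mul _]
  simp only [integral_finsetSum _ fun j _ => (h.integrable_cov _ j).const_mul _,
    integral_const_mul, h.integral_cov, dotProduct, mulVec, Finset.mul_sum]
  exact Finset.sum_congr rfl fun i _ => Finset.sum_congr rfl fun j _ => by ring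

theorem ofReal_one_sub_le_measure (h : HasMeanCov ν μ S) (a : ι → ℝ) (b : ℝ) {ε : ℝ}
    (hε0 : 0 < ε) (hε1 : ε < 1) (hab : a ⬝ᵥ μ + b + √((1 - ε) / ε) * √(a ⬝ᵥ S *ᵥ a) ≤ 0) :
    ENNReal.ofReal (1 - ε) ≤ ν {x | a ⬝ᵥ x + b ≤ 0} := by
  have := h.isProbabilityMeasure
  set m := a ⬝ᵥ μ + b
  set s := a ⬝ᵥ S *ᵥ a
  have hs : 0 ≤ s :=
    (integral_nonneg fun x => sq_nonneg (a ⬝ᵥ (x - μ))).trans_eq (h.integral_sq_dotProduct_sub a)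
  have hm : m ≤ 0 := by nlinarith [Real.sqrt_nonneg ((1 - ε) / ε), Real.sqrt_nonneg s]
  have hms : (1 - ε) * s ≤ ε * m ^ 2 := by
    have hk : √((1 - ε) / ε * s) ≤ -m := by
      rw [Real.sqrt_mul (div_nonneg (by linarith) hε0.le)]; linarith
    rw [Real.sqrt_le_left (by linarith), div_mul_eq_mul_div, div_le_iff₀ hε0] at hk
    linarith
  have hpos : ν.real {x | 0 < a ⬝ᵥ x + b} ≤ ε := by
    have hshift (x : ι → ℝ) : a ⬝ᵥ x + b = a ⬝ᵥ (x - μ) + m := by rw [dotProduct_sub]; ring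
    simp only [hshift]
    exact measureReal_add_pos_le (h.integrable_dotProduct_sub a)
      (h.integrable_sq_dotProduct_sub a) (h.integral_dotProduct_sub a) hε0 hε1 hm
      (by rwa [h.integral_sq_dotProduct_sub])
  have hmeas : MeasurableSet {x : ι → ℝ | 0 < a ⬝ᵥ x + b} :=
    measurableSet_lt measurable_const (by fun_prop)
  have hcompl : {x | a ⬝ᵥ x + b ≤ 0} = {x : ι → ℝ | 0 < a ⬝ᵥ x + b}ᶜ := by ext; simp
  rw [← ofReal_measureReal, hcompl, probReal_compl_eq_one_sub hmeas]
  exact ENNReal.ofReal_le_ofReal (by linarith)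

end HasMeanCov

section DiscreteMeasure

variable {Ω E : Type*} [Fintype Ω] [MeasurableSpace E]

noncomputable def discreteMeasure (c : Ω → ℝ) (X : Ω → E) : Measure E :=
  ∑ ω, ENNReal.ofReal (c ω) • Measure.dirac (X ω)

variable {c : Ω → ℝ} {X : Ω → E}

theorem isProbabilityMeasure_discreteMeasure (hc : ∀ ω, 0 ≤ c ω) (h1 : ∑ ω, c ω = 1) :
    IsProbabilityMeasure (discreteMeasure c X) := by
  constructor
  simp only [discreteMeasure, Measure.finsetSum_apply, Measure.smul_apply, measure_univ,
    smul_eq_mul, mul_one]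
  rw [← ENNReal.ofReal_sum_of_nonneg fun ω _ => hc ω, h1, ENNReal.ofReal_one]

variable [MeasurableSingletonClass E]

theorem integrable_discreteMeasure (f : E → ℝ) : Integrable f (discreteMeasure c X) :=
  integrable_finsetSum_measure.2 fun _ _ =>
    (integrable_dirac enorm_lt_top).smul_measure ENNReal.ofReal_ne_top

theorem integral_discreteMeasure (hc : ∀ ω, 0 ≤ c ω) (f : E → ℝ) :
    ∫ x, f x ∂discreteMeasure c X = ∑ ω, c ω * f (X ω) := by
  rw [discreteMeasure, integral_finsetSum_measure fun _ _ =>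
    (integrable_dirac enorm_lt_top).smul_measure ENNReal.ofReal_ne_top]
  refine Finset.sum_congr rfl fun ω _ => ?_
  rw [integral_smul_measure, integral_dirac, ENNReal.toReal_ofReal (hc ω), smul_eq_mul]

theorem discreteMeasure_le_of_notMem {A : Set E} {s : Finset Ω} (hc : ∀ ω, 0 ≤ c ω)
    (hs : ∀ ω ∉ s, X ω ∉ A) : discreteMeasure c X A ≤ ENNReal.ofReal (∑ ω ∈ s, c ω) := by
  rw [ENNReal.ofReal_sum_of_nonneg fun ω _ => hc ω, discreteMeasure, Measure.finsetSum_apply,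
    ← Finset.sum_subset (Finset.subset_univ s) fun ω _ hω => by
      rw [Measure.smul_apply, Measure.dirac_apply, Set.indicator_of_notMem (hs ω hω), smul_zero]]
  refine Finset.sum_le_sum fun ω _ => ?_
  rw [Measure.smul_apply, smul_eq_mul]
  exact mul_le_of_le_one_right' prob_le_one

end DiscreteMeasure

structure IsCenteredLaw {Ω ι : Type*} [Fintype Ω] (c : Ω → ℝ) (D : Ω → ι → ℝ)
    (S : Matrix ι ι ℝ) : Prop where
  nonneg : ∀ ω, 0 ≤ c ω
  sum_eq_one : ∑ ω, c ω = 1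
  sum_mul_eq_zero : ∀ i, ∑ ω, c ω * D ω i = 0
  sum_mul_mul_eq : ∀ i j, ∑ ω, c ω * (D ω i * D ω j) = S i j

namespace IsCenteredLaw

variable {Ω Ω' ι : Type*} [Fintype Ω] [Fintype Ω'] {c : Ω → ℝ} {D : Ω → ι → ℝ}
  {S : Matrix ι ι ℝ}

theorem hasMeanCov [Fintype ι] (h : IsCenteredLaw c D S) (μ : ι → ℝ) :
    HasMeanCov (discreteMeasure c fun ω => μ + D ω) μ S where
  isProbabilityMeasure := isProbabilityMeasure_discreteMeasure h.nonneg h.sum_eq_one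
  integrable_eval _ := integrable_discreteMeasure _
  integrable_cov _ _ := integrable_discreteMeasure _
  integral_eval i := by
    simp only [integral_discreteMeasure h.nonneg, Pi.add_apply, mul_add, Finset.sum_add_distrib,
      ← Finset.sum_mul, h.sum_eq_one, h.sum_mul_eq_zero, one_mul, add_zero]
  integral_cov i j := by
    simp only [integral_discreteMeasure h.nonneg, Pi.add_apply, add_sub_cancel_left,
      h.sum_mul_mul_eq]

theorem prod {c' : Ω' → ℝ} {D' : Ω' → ι → ℝ} {S' : Matrix ι ι ℝ}
    (h : IsCenteredLaw c D S) (h' : IsCenteredLaw c' D' S') :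
    IsCenteredLaw (fun ω : Ω × Ω' => c ω.1 * c' ω.2) (fun ω => D ω.1 + D' ω.2) (S + S') where
  nonneg ω := mul_nonneg (h.nonneg _) (h'.nonneg _)
  sum_eq_one := by
    rw [Fintype.sum_prod_type, ← Fintype.sum_mul_sum, h.sum_eq_one, h'.sum_eq_one, one_mul]
  sum_mul_eq_zero i := by
    have hsplit (ω : Ω) (ω' : Ω') : c ω * c' ω' * (D ω + D' ω') i =
        c ω * D ω i * c' ω' + c ω * (c' ω' * D' ω' i) := by
      rw [Pi.add_apply]; ring
    simp only [Fintype.sum_prod_type, hsplit, Finset.sum_add_distrib, ← Finset.mul_sum,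
      ← Finset.sum_mul, h.sum_mul_eq_zero, h'.sum_mul_eq_zero]
    simp
  sum_mul_mul_eq i j := by
    have hsplit (ω : Ω) (ω' : Ω') : c ω * c' ω' * ((D ω + D' ω') i * (D ω + D' ω') j) =
        c ω * (D ω i * D ω j) * c' ω' + c ω * D ω i * (c' ω' * D' ω' j) +
          c ω * D ω j * (c' ω' * D' ω' i) + c ω * (c' ω' * (D' ω' i * D' ω' j)) := by
      simp only [Pi.add_apply]; ring
    simp only [Fintype.sum_prod_type, hsplit, Finset.sum_add_distrib, ← Finset.mul_sum,
      ← Finset.sum_mul, h.sum_mul_eq_zero, h'.sum_mul_eq_zero, h.sum_mul_mul_eq,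
      h'.sum_mul_mul_eq, h.sum_eq_one, h'.sum_eq_one]
    simp

end IsCenteredLaw

variable {ι : Type*}

theorem isCenteredLaw_twoPoint {t : ℝ} (ht : 0 < t) (w : ι → ℝ) :
    IsCenteredLaw (fun s : Bool => if s then 1 / (1 + t ^ 2) else t ^ 2 / (1 + t ^ 2))
      (fun s => (if s then t else -t⁻¹) • w) (vecMulVec w w) where
  nonneg s := by cases s <;> positivity
  sum_eq_one := by
    rw [Fintype.sum_bool, if_pos rfl, if_neg Bool.false_ne_true]
    field_simp
  sum_mul_eq_zero i := by
    simp only [Fintype.sum_bool, if_true, Bool.false_eq_true, if_false, Pi.smul_apply,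
      smul_eq_mul]
    field_simp
    ring
  sum_mul_mul_eq i j := by
    simp only [Fintype.sum_bool, if_true, Bool.false_eq_true, if_false, Pi.smul_apply,
      smul_eq_mul, vecMulVec_apply]
    field_simp
    ring

theorem isCenteredLaw_signs {κ : Type*} [Fintype κ] [Nonempty κ] (v : κ → ι → ℝ) :
    IsCenteredLaw (fun _ : κ × Bool => 1 / (2 * Fintype.card κ))
      (fun ω => ((if ω.2 then 1 else -1) * √(Fintype.card κ)) • v ω.1)
      (∑ k, vecMulVec (v k) (v k)) where
  nonneg _ := by positivity
  sum_eq_one := by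
    simp only [Finset.sum_const, Finset.card_univ, Fintype.card_prod, Fintype.card_bool,
      nsmul_eq_mul]
    push_cast
    field_simp
  sum_mul_eq_zero i := by
    simp [Fintype.sum_prod_type]
  sum_mul_mul_eq i j := by
    have hN : (0 : ℝ) < Fintype.card κ := Nat.cast_pos.2 Fintype.card_pos
    simp only [Fintype.sum_prod_type, Fintype.sum_bool, if_true, Bool.false_eq_true, if_false,
      Pi.smul_apply, smul_eq_mul, Matrix.sum_apply, vecMulVec_apply]
    refine Finset.sum_congr rfl fun k _ => ?_
    have hsqrt := Real.mul_self_sqrt hN.le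
    field_simp
    linear_combination (2 * v k i * v k j) * hsqrt

variable [Fintype ι]

theorem exists_sum_vecMulVec_eq_add {κ : Type*} [Fintype κ] (r : κ → ι → ℝ) (a : ι → ℝ) :
    ∃ (w : ι → ℝ) (v : κ → ι → ℝ), a ⬝ᵥ w = √(∑ k, (a ⬝ᵥ r k) ^ 2) ∧ (∀ k, a ⬝ᵥ v k = 0) ∧
      ∑ k, vecMulVec (r k) (r k) = vecMulVec w w + ∑ k, vecMulVec (v k) (v k) := by
  -- split off from each `r k` its component along `w = ∑ γₖ rₖ`, where `γ = (aᵀrₖ)ₖ / σ` is a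
  -- unit vector, or `0` when `σ = 0`
  set σ := √(∑ k, (a ⬝ᵥ r k) ^ 2)
  have hσ : σ ^ 2 = ∑ k, (a ⬝ᵥ r k) ^ 2 := Real.sq_sqrt (by positivity)
  have hr (k) : σ = 0 → a ⬝ᵥ r k = 0 := fun h0 => by
    rw [h0, sq, zero_mul, eq_comm, Finset.sum_eq_zero_iff_of_nonneg fun _ _ => sq_nonneg _] at hσ
    exact pow_eq_zero_iff two_ne_zero |>.1 (hσ k (Finset.mem_univ k))
  set γ : κ → ℝ := fun k => a ⬝ᵥ r k / σ
  set w := ∑ k, γ k • r k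
  have hw (i) : ∑ k, γ k * r k i = w i := by simp [w, Finset.sum_apply]
  have hγ (i j) : w i * w j * ∑ k, γ k ^ 2 = w i * w j := by
    rcases eq_or_ne σ 0 with h0 | h0
    · simp [w, γ, h0]
    · simp only [γ, div_pow, ← Finset.sum_div, ← hσ, div_self (pow_ne_zero 2 h0), mul_one]
  have haw : a ⬝ᵥ w = σ := by
    simp only [w, dotProduct_sum, dotProduct_smul, smul_eq_mul, γ, div_mul_eq_mul_div,
      ← sq, ← Finset.sum_div, ← hσ]
    rcases eq_or_ne σ 0 with h0 | h0 <;> field_simp [h0]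
  refine ⟨w, fun k => r k - γ k • w, haw, fun k => ?_, ?_⟩
  · rw [dotProduct_sub, dotProduct_smul, haw, smul_eq_mul, div_mul_cancel_of_imp (hr k), sub_self]
  · ext i j
    simp only [Matrix.add_apply, Matrix.sum_apply, vecMulVec_apply, Pi.sub_apply, Pi.smul_apply,
      smul_eq_mul]
    have hexpand : ∑ k, (r k i - γ k * w i) * (r k j - γ k * w j) = ∑ k, r k i * r k j -
        w i * ∑ k, γ k * r k j - w j * ∑ k, γ k * r k i + w i * w j * ∑ k, γ k ^ 2 := by
      simp only [Finset.mul_sum, ← Finset.sum_sub_distrib, ← Finset.sum_add_distrib]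
      exact Finset.sum_congr rfl fun k _ => by ring
    rw [hexpand, hw, hw, hγ]
    ring

theorem dotProduct_sum_vecMulVec_mulVec {κ : Type*} [Fintype κ] (r : κ → ι → ℝ) (a : ι → ℝ) :
    a ⬝ᵥ (∑ k, vecMulVec (r k) (r k)) *ᵥ a = ∑ k, (a ⬝ᵥ r k) ^ 2 := by
  simp [Matrix.sum_mulVec, dotProduct_sum, vecMulVec_mulVec, sq, dotProduct_comm]

theorem exists_hasMeanCov_measure_lt_le {S : Matrix ι ι ℝ} (hS : S.PosSemidef) (μ a : ι → ℝ)
    {t : ℝ} (ht : 0 < t) :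
    ∃ ν, HasMeanCov ν μ S ∧
      ν {x | a ⬝ᵥ x < a ⬝ᵥ μ + t * √(a ⬝ᵥ S *ᵥ a)} ≤ ENNReal.ofReal (t ^ 2 / (1 + t ^ 2)) := by
  obtain ⟨m, r, rfl⟩ := posSemidef_iff_eq_sum_vecMulVec.1 hS
  simp only [star_trivial, dotProduct_sum_vecMulVec_mulVec]
  obtain ⟨w, v, haw, hav, hrv⟩ := exists_sum_vecMulVec_eq_add r a
  -- the zero vector at `none` keeps the index type of the sign law nonempty
  have hlaw := (isCenteredLaw_twoPoint ht w).prod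
    (isCenteredLaw_signs fun o : Option (Fin m) => o.elim 0 v)
  have hcov : vecMulVec w w + ∑ o : Option (Fin m), vecMulVec (o.elim 0 v) (o.elim 0 v) =
      ∑ k, vecMulVec (r k) (r k) := by
    simp [Fintype.sum_option, hrv]
  refine ⟨_, hcov ▸ hlaw.hasMeanCov μ, ?_⟩
  refine (discreteMeasure_le_of_notMem hlaw.nonneg (s := {false} ×ˢ Finset.univ) ?_).trans_eq ?_
  · rintro ⟨_ | _, o, g⟩ hω
    · simp at hω
    · cases o <;> cases g <;> simp [haw, hav]
  · have hsigns := (isCenteredLaw_signs fun o : Option (Fin m) => o.elim 0 v).sum_eq_one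
    simp only [Finset.sum_product, Finset.sum_singleton, Bool.false_eq_true, if_false,
      ← Finset.mul_sum, hsigns, mul_one]

theorem add_sqrt_mul_sqrt_nonpos_of_forall_hasMeanCov {μ : ι → ℝ} {S : Matrix ι ι ℝ}
    (hS : S.PosSemidef) (a : ι → ℝ) (b : ℝ) {ε : ℝ} (hε0 : 0 < ε) (hε1 : ε < 1)
    (h : ∀ ν, HasMeanCov ν μ S → ENNReal.ofReal (1 - ε) ≤ ν {x | a ⬝ᵥ x + b ≤ 0}) :
    a ⬝ᵥ μ + b + √((1 - ε) / ε) * √(a ⬝ᵥ S *ᵥ a) ≤ 0 := by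
  set k := √((1 - ε) / ε)
  set σ := √(a ⬝ᵥ S *ᵥ a)
  by_contra! hviol
  have hk : 0 < k := Real.sqrt_pos.2 (div_pos (by linarith) hε0)
  have hnear : ∀ᶠ t in 𝓝[<] k, 0 < a ⬝ᵥ μ + b + t * σ := nhdsWithin_le_nhds <|
    (by fun_prop : Continuous fun t => a ⬝ᵥ μ + b + t * σ).continuousAt.eventually
      (lt_mem_nhds hviol)
  obtain ⟨t, ⟨ht0, htk⟩, hmargin⟩ := (Filter.Eventually.and (Ioo_mem_nhdsLT hk) hnear).exists
  obtain ⟨ν, hν, hνle⟩ := exists_hasMeanCov_measure_lt_le hS μ a ht0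
  have hsub : {x | a ⬝ᵥ x + b ≤ 0} ⊆ {x | a ⬝ᵥ x < a ⬝ᵥ μ + t * σ} :=
    fun x (hx : a ⬝ᵥ x + b ≤ 0) => show a ⬝ᵥ x < a ⬝ᵥ μ + t * σ by linarith
  have hle := ((h ν hν).trans (measure_mono hsub)).trans hνle
  rw [ENNReal.ofReal_le_ofReal_iff (by positivity), le_div_iff₀ (by positivity)] at hle
  have htk2 : t ^ 2 < (1 - ε) / ε := by
    rw [← Real.sq_sqrt (div_nonneg (by linarith) hε0.le)]
    exact pow_lt_pow_left₀ htk ht0.le two_ne_zero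
  rw [lt_div_iff₀ hε0] at htk2
  nlinarith

/-- Distributionally robust linear chance constraint (Lemma 1):
`inf_{x ~ (μ,S)} Pr(aᵀx + b ≤ 0) ≥ 1 − ε` iff
`aᵀμ + b + √((1−ε)/ε)·√(aᵀSa) ≤ 0`. -/
theorem drcc_linear_iff (n : ℕ) (μ : Fin n → ℝ) (S : Matrix (Fin n) (Fin n) ℝ)
    (hS : S.PosSemidef) (a : Fin n → ℝ) (b : ℝ) (ε : ℝ) (hε0 : 0 < ε) (hε1 : ε < 1) :
    (∀ ν : Measure (Fin n → ℝ), IsProbabilityMeasure ν →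
      (∀ i, Integrable (fun x => x i) ν) →
      (∀ i j, Integrable (fun x => (x i - μ i) * (x j - μ j)) ν) →
      (∀ i, ∫ x, x i ∂ν = μ i) →
      (∀ i j, ∫ x, (x i - μ i) * (x j - μ j) ∂ν = S i j) →
      ν {x | a ⬝ᵥ x + b ≤ 0} ≥ ENNReal.ofReal (1 - ε)) ↔
    a ⬝ᵥ μ + b + Real.sqrt ((1 - ε) / ε) * Real.sqrt (a ⬝ᵥ S.mulVec a) ≤ 0 :=
  ⟨fun h => add_sqrt_mul_sqrt_nonpos_of_forall_hasMeanCov hS a b hε0 hε1 fun ν hν =>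
      h ν hν.isProbabilityMeasure hν.integrable_eval hν.integrable_cov hν.integral_eval
        hν.integral_cov,
    fun h _ h₁ h₂ h₃ h₄ h₅ =>
      HasMeanCov.ofReal_one_sub_le_measure ⟨h₁, h₂, h₃, h₄, h₅⟩ a b hε0 hε1 h⟩
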